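/- arXiv:2006.07999 — 3 statements merged into one kernel-verified Lean document; each statement's English description precedes it below -/
import Mathlib

section
/- Let k > 0 be a real number with 0.558·ln k ≥ 1 and set L = ⌊0.558·ln k⌋. For every nonzero a ∈ ℝ^{L+1}, the function λ ↦ g(a,λ) is differentiable on (0,∞) and its derivative in λ is strictly negative at every λ ≥ 6.5·L; consequently λ ↦ g(a,λ) is strictly decreasing on [6.5·L, ∞). -/
/-!
Write `E = e^{-λ}`, `S(λ) = ∑ a_l² l! λ^l`, `p(λ) = ∑ a_l λ^l` and `Q(λ) = ∑_{l ≤ L} λ^l / l!`, so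
that `g = E S / k + (E p)²`. Then `λ g' = (E / k) (λ S' - λ S) + 2 E² p (λ p' - λ p)`, and on
`λ > L` three estimates control it: `λ S' ≤ L S`, and by Cauchy–Schwarz against the weights
`l! λ^l` both `p² ≤ S Q` and `(λ p' - λ p)² ≤ λ² S Q`, since `|l - λ| ≤ λ`. Hence `g'(λ) < 0` as
soon as `2 k E Q < 1 - L / λ`. For `λ ≥ 6.5 L` the sum `Q` is dominated by its last term up to the
geometric factor `13 / 11`, `λ^L e^{-λ}` is decreasing, and the choice `L = ⌊0.558 log k⌋` makes
`k (6.5 L)^L e^{-6.5 L} / L!` smaller than `121 / 338`, where `2 · (13/11) · (121/338) = 11/13`.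
-/

open Real Finset

/-- The objective function `g(a, λ)` of the regularized weighted Chebyshev problem. -/
noncomputable def gObj {L : ℕ} (k : ℝ) (a : Fin (L + 1) → ℝ) (lam : ℝ) : ℝ :=
  (1 / k) * ∑ l : Fin (L + 1), Real.exp (-lam) * (a l) ^ 2 * lam ^ (l : ℕ) * (Nat.factorial (l : ℕ) : ℝ) +
    (Real.exp (-lam) * ∑ l : Fin (L + 1), a l * lam ^ (l : ℕ)) ^ 2

open scoped Nat

noncomputable def expPartialSum (L : ℕ) (x : ℝ) : ℝ := ∑ l ∈ range (L + 1), x ^ l / l !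

theorem expPartialSum_le {r x : ℝ} (hx : 0 < x) (hr : r < 1) :
    ∀ {L : ℕ}, (L : ℝ) ≤ r * x → expPartialSum L x ≤ x ^ L / L ! / (1 - r)
  | 0, h => by
    have hr0 : 0 ≤ r := nonneg_of_mul_nonneg_left (by simpa using h) hx
    rw [expPartialSum]
    simp only [zero_add, range_one, sum_singleton, pow_zero, Nat.factorial_zero, Nat.cast_one,
      div_one]
    rw [le_div_iff₀ (by linarith)]
    linarith
  | L + 1, h => by
    have ih := expPartialSum_le hx hr (L := L) (by push_cast at h; linarith)
    have hstep : x ^ L / L ! ≤ r * (x ^ (L + 1) / (L + 1)!) :=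
      calc x ^ L / L ! ≤ r * x / (L + 1) * (x ^ L / L !) := by
            refine le_mul_of_one_le_left (by positivity) ?_
            rw [one_le_div (by positivity)]; exact_mod_cast h
        _ = r * (x ^ (L + 1) / (L + 1)!) := by
            rw [Nat.factorial_succ, pow_succ]; push_cast; field_simp
    have hr' : 0 < 1 - r := by linarith
    rw [expPartialSum, sum_range_succ, ← expPartialSum]
    calc expPartialSum L x + x ^ (L + 1) / (L + 1)!
        ≤ r * (x ^ (L + 1) / (L + 1)!) / (1 - r) + x ^ (L + 1) / (L + 1)! := by
          gcongr; exact ih.trans (by gcongr)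
      _ = x ^ (L + 1) / (L + 1)! / (1 - r) := by field_simp; ring

theorem pow_mul_exp_neg_le {n : ℕ} {c x : ℝ} (hc : 0 < c) (hn : (n : ℝ) ≤ c) (hcx : c ≤ x) :
    x ^ n * exp (-x) ≤ c ^ n * exp (-c) := by
  have hratio : (x / c) ^ n ≤ exp (x - c) :=
    calc (x / c) ^ n ≤ exp (x / c - 1) ^ n := by
          gcongr
          · exact div_nonneg (hc.le.trans hcx) hc.le
          · linarith [add_one_le_exp (x / c - 1)]
      _ = exp (n * (x / c - 1)) := (exp_nat_mul _ n).symm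
      _ ≤ exp (x - c) := by
          gcongr
          have : 0 ≤ x / c - 1 := by rw [sub_nonneg, one_le_div hc]; exact hcx
          calc (n : ℝ) * (x / c - 1) ≤ c * (x / c - 1) := by gcongr
            _ = x - c := by field_simp
  calc x ^ n * exp (-x) = c ^ n * (x / c) ^ n * exp (-x) := by rw [div_pow]; field_simp
    _ ≤ c ^ n * exp (x - c) * exp (-x) := by gcongr
    _ = c ^ n * exp (-c) := by rw [mul_assoc, ← exp_add]; ring_nf

theorem pow_div_factorial_le_exp_sub_one {n : ℕ} (hn : 1 ≤ n) :
    (n : ℝ) ^ n / n ! ≤ exp (n - 1) := by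
  induction n, hn using Nat.le_induction with
  | base => simp
  | succ n hn ih =>
    have hn0 : (0 : ℝ) < n := by exact_mod_cast hn
    have he : (1 + 1 / (n : ℝ)) ^ n ≤ exp 1 :=
      calc (1 + 1 / (n : ℝ)) ^ n ≤ exp (1 / n) ^ n := by
            gcongr; linarith [add_one_le_exp (1 / (n : ℝ))]
        _ = exp 1 := by rw [← exp_nat_mul]; field_simp
    calc ((n + 1 : ℕ) : ℝ) ^ (n + 1) / (n + 1)! = (1 + 1 / (n : ℝ)) ^ n * ((n : ℝ) ^ n / n !) := by
          rw [Nat.factorial_succ, show 1 + 1 / (n : ℝ) = (n + 1) / n by field_simp, div_pow]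
          push_cast; field_simp; ring
      _ ≤ exp 1 * exp (n - 1) := by gcongr
      _ = exp (((n + 1 : ℕ) : ℝ) - 1) := by rw [← exp_add]; push_cast; ring_nf

section

variable {L : ℕ}

noncomputable def polyEval (c : Fin (L + 1) → ℝ) (x : ℝ) : ℝ := ∑ l, c l * x ^ (l : ℕ)

noncomputable def sqFactorial (a : Fin (L + 1) → ℝ) (l : Fin (L + 1)) : ℝ := a l ^ 2 * (l : ℕ)!

theorem hasDerivAt_polyEval (c : Fin (L + 1) → ℝ) {x : ℝ} (hx : x ≠ 0) :
    HasDerivAt (polyEval c) (polyEval (fun l ↦ l * c l) x / x) x := by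
  have h : HasDerivAt (polyEval c) (∑ l : Fin (L + 1), c l * ((l : ℕ) * x ^ ((l : ℕ) - 1))) x :=
    HasDerivAt.fun_sum fun l _ ↦ (hasDerivAt_pow (l : ℕ) x).const_mul (c l)
  refine h.congr_deriv ?_
  rw [eq_div_iff hx, polyEval, sum_mul]
  refine sum_congr rfl fun l _ ↦ ?_
  rcases eq_or_ne (l : ℕ) 0 with hl | hl
  · simp [hl]
  · rw [← mul_pow_sub_one hl x]; ring

theorem gObj_eq (k : ℝ) (a : Fin (L + 1) → ℝ) :
    gObj k a = fun x ↦
      exp (-x) * polyEval (sqFactorial a) x / k + (exp (-x) * polyEval a x) ^ 2 := by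
  funext x
  simp only [gObj, polyEval, sqFactorial, mul_sum, div_eq_inv_mul]
  congr 1
  refine sum_congr rfl fun l _ ↦ ?_
  ring

theorem hasDerivAt_gObj (k : ℝ) (a : Fin (L + 1) → ℝ) {x : ℝ} (hx : x ≠ 0) :
    HasDerivAt (gObj k a)
      (exp (-x) * (polyEval (fun l ↦ l * sqFactorial a l) x / x - polyEval (sqFactorial a) x) / k +
        2 * exp (-x) ^ 2 * polyEval a x * (polyEval (fun l ↦ l * a l) x / x - polyEval a x)) x := by
  have hE : HasDerivAt (fun y ↦ exp (-y)) (-exp (-x)) x := by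
    simpa using (hasDerivAt_neg x).exp
  rw [gObj_eq]
  refine (((hE.fun_mul (hasDerivAt_polyEval (sqFactorial a) hx)).div_const k).fun_add
    ((hE.fun_mul (hasDerivAt_polyEval a hx)).fun_pow 2)).congr_deriv ?_
  simp only [Nat.cast_ofNat]
  ring

theorem polyEval_sqFactorial_pos {a : Fin (L + 1) → ℝ} (ha : a ≠ 0) {x : ℝ} (hx : 0 < x) :
    0 < polyEval (sqFactorial a) x := by
  obtain ⟨i, hi⟩ := Function.ne_iff.mp ha
  refine sum_pos' (fun l _ ↦ by unfold sqFactorial; positivity) ⟨i, mem_univ i, ?_⟩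
  unfold sqFactorial
  have := (i : ℕ).factorial_pos
  have : 0 < a i ^ 2 := sq_pos_of_ne_zero hi
  positivity

theorem polyEval_natMul_sqFactorial_le (a : Fin (L + 1) → ℝ) {x : ℝ} (hx : 0 ≤ x) :
    polyEval (fun l ↦ l * sqFactorial a l) x ≤ L * polyEval (sqFactorial a) x := by
  rw [polyEval, polyEval, mul_sum]
  refine sum_le_sum fun l _ ↦ ?_
  rw [mul_assoc]
  exact mul_le_mul_of_nonneg_right (by exact_mod_cast l.is_le) (by unfold sqFactorial; positivity)

theorem sq_polyEval_mul_le (a c : Fin (L + 1) → ℝ) {B x : ℝ} (hx : 0 ≤ x)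
    (hc : ∀ l, c l ^ 2 ≤ B) :
    polyEval (fun l ↦ a l * c l) x ^ 2 ≤ polyEval (sqFactorial a) x * (B * expPartialSum L x) := by
  have hB : 0 ≤ B := (sq_nonneg _).trans (hc 0)
  rw [expPartialSum, ← Fin.sum_univ_eq_sum_range (fun l ↦ x ^ l / l !), mul_sum]
  refine sum_sq_le_sum_mul_sum_of_sq_le_mul _ (fun l _ ↦ by unfold sqFactorial; positivity)
    (fun l _ ↦ by positivity) fun l _ ↦ ?_
  have hfac : ((l : ℕ)! : ℝ) ≠ 0 := by positivity
  calc (a l * c l * x ^ (l : ℕ)) ^ 2 = c l ^ 2 * (a l ^ 2 * (x ^ (l : ℕ)) ^ 2) := by ring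
    _ ≤ B * (a l ^ 2 * (x ^ (l : ℕ)) ^ 2) := by gcongr; exact hc l
    _ = sqFactorial a l * x ^ (l : ℕ) * (B * (x ^ (l : ℕ) / (l : ℕ)!)) := by
      unfold sqFactorial; field_simp

theorem polyEval_mul_natCast_sub (a : Fin (L + 1) → ℝ) (x : ℝ) :
    polyEval (fun l ↦ a l * ((l : ℕ) - x)) x = polyEval (fun l ↦ l * a l) x - x * polyEval a x := by
  simp only [polyEval, mul_sum, ← sum_sub_distrib]
  exact sum_congr rfl fun l _ ↦ by ring

theorem deriv_gObj_neg {k x : ℝ} {a : Fin (L + 1) → ℝ} (hk : 0 < k) (hx : 0 < x) (ha : a ≠ 0)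
    (h : 2 * k * exp (-x) * expPartialSum L x < 1 - L / x) : deriv (gObj k a) x < 0 := by
  rw [(hasDerivAt_gObj k a hx.ne').deriv]
  set E := exp (-x)
  set Q := expPartialSum L x
  set S := polyEval (sqFactorial a) x
  set p := polyEval a x
  set q := polyEval (fun l ↦ l * a l) x - x * p
  have hQ : 0 < Q := by
    unfold Q expPartialSum; exact sum_pos (fun l _ ↦ by positivity) nonempty_range_add_one
  have hLx : (L : ℝ) < x := by
    have : 0 < 1 - L / x := lt_trans (by positivity) h
    rwa [sub_pos, div_lt_one hx] at this
  have hS : 0 < S := polyEval_sqFactorial_pos ha hx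
  have hSL : polyEval (fun l ↦ l * sqFactorial a l) x ≤ L * S :=
    polyEval_natMul_sqFactorial_le a hx.le
  have hp : p ^ 2 ≤ S * (1 * Q) := by
    simpa using sq_polyEval_mul_le a (fun _ ↦ 1) hx.le (fun _ ↦ le_of_eq (one_pow 2))
  have hq : q ^ 2 ≤ S * (x ^ 2 * Q) := by
    rw [show q = _ from (polyEval_mul_natCast_sub a x).symm]
    refine sq_polyEval_mul_le a _ hx.le fun l ↦ sq_le_sq' ?_ ?_
    · linarith [(Nat.cast_nonneg l : (0 : ℝ) ≤ (l : ℕ))]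
    · have : ((l : ℕ) : ℝ) ≤ L := by exact_mod_cast l.is_le
      linarith
  have hpq : p * q ≤ x * (S * Q) := by nlinarith [sq_nonneg (x * p - q)]
  calc E * (polyEval (fun l ↦ l * sqFactorial a l) x / x - S) / k +
        2 * E ^ 2 * p * (polyEval (fun l ↦ l * a l) x / x - p)
      = E / (k * x) * (polyEval (fun l ↦ l * sqFactorial a l) x - x * S) +
          2 * E ^ 2 / x * (p * q) := by
        simp only [q]; field_simp
    _ ≤ E / (k * x) * (L * S - x * S) + 2 * E ^ 2 / x * (x * (S * Q)) := by gcongr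
    _ = E * S / k * (2 * k * E * Q - (1 - L / x)) := by field_simp; ring
    _ < 0 := mul_neg_of_pos_of_neg (by positivity) (by linarith)

end

theorem mul_pow_mul_exp_neg_div_factorial_lt {k : ℝ} {L : ℕ} (hk : 0 < k) (hL : 1 ≤ L)
    (hkL : 0.558 * log k < L + 1) :
    k * ((6.5 * L) ^ L * exp (-(6.5 * L)) / L !) < 121 / 338 := by
  have hk' : k < exp ((L + 1) / 0.558) := by
    rw [← exp_log hk, exp_lt_exp, lt_div_iff₀ (by norm_num)]; linarith
  have h65 : (6.5 : ℝ) ≤ exp 1.88 := by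
    refine le_trans ?_ (sum_le_exp_of_nonneg (by norm_num) 7)
    norm_num [sum_range_succ, Nat.factorial]
  have he : exp (-1.035) < (121 / 338 : ℝ) := by
    rw [exp_neg, inv_lt_comm₀ (exp_pos _) (by norm_num)]
    refine lt_of_lt_of_le ?_ (sum_le_exp_of_nonneg (by norm_num) 7)
    norm_num [sum_range_succ, Nat.factorial]
  have hL1 : (1 : ℝ) ≤ L := by exact_mod_cast hL
  calc k * ((6.5 * L) ^ L * exp (-(6.5 * L)) / L !)
      = k * (6.5 ^ L * ((L : ℝ) ^ L / L !) * exp (-(6.5 * L))) := by ring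
    _ ≤ exp ((L + 1) / 0.558) * (exp 1.88 ^ L * exp (L - 1) * exp (-(6.5 * L))) := by
        gcongr
        exact pow_div_factorial_le_exp_sub_one hL
    _ = exp ((L + 1) / 0.558 + 1.88 * L + (L - 1) - 6.5 * L) := by
        rw [← exp_nat_mul, ← exp_add, ← exp_add, ← exp_add]; ring_nf
    _ ≤ exp (-1.035) := by
        -- tight at `L = 1`: `2 / 0.558 = 3.5842… ≤ 3.585`
        have : ((L : ℝ) + 1) / 0.558 ≤ 3.62 * L - 0.035 := by
          rw [div_le_iff₀ (by norm_num)]; linarith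
        gcongr; linarith
    _ < 121 / 338 := he

theorem two_mul_exp_neg_mul_expPartialSum_lt {k x : ℝ} {L : ℕ} (hk : 0 < k) (hL : 1 ≤ L)
    (hkL : 0.558 * log k < L + 1) (hx : 6.5 * L ≤ x) :
    2 * k * exp (-x) * expPartialSum L x < 1 - L / x := by
  have hc : 0 < 6.5 * (L : ℝ) := by positivity
  have hx0 : 0 < x := hc.trans_le hx
  have hQ : expPartialSum L x ≤ x ^ L / L ! / (1 - 2 / 13) :=
    expPartialSum_le hx0 (by norm_num) (by linarith)
  have hpeak : x ^ L * exp (-x) ≤ (6.5 * L) ^ L * exp (-(6.5 * L)) :=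
    pow_mul_exp_neg_le hc (by linarith) hx
  have hnum := mul_pow_mul_exp_neg_div_factorial_lt hk hL hkL
  have hLx : (L : ℝ) / x ≤ 2 / 13 := by rw [div_le_iff₀ hx0]; linarith
  calc 2 * k * exp (-x) * expPartialSum L x
      ≤ 2 * k * exp (-x) * (x ^ L / L ! / (1 - 2 / 13)) := by gcongr
    _ = 26 / 11 * (k * (x ^ L * exp (-x) / L !)) := by ring
    _ ≤ 26 / 11 * (k * ((6.5 * L) ^ L * exp (-(6.5 * L)) / L !)) := by gcongr
    _ < 26 / 11 * (121 / 338) := by gcongr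
    _ ≤ 1 - L / x := by linarith

theorem stmt_1 (k : ℝ) (hk : 0 < k) (hlog : 1 ≤ 0.558 * Real.log k)
    (L : ℕ) (hL : L = ⌊0.558 * Real.log k⌋₊)
    (a : Fin (L + 1) → ℝ) (ha : a ≠ 0) :
    (∀ lam : ℝ, 0 < lam → DifferentiableAt ℝ (gObj k a) lam) ∧
    (∀ lam : ℝ, 6.5 * L ≤ lam → deriv (gObj k a) lam < 0) ∧
    StrictAntiOn (gObj k a) (Set.Ici (6.5 * L)) := by
  have hL1 : 1 ≤ L := hL ▸ Nat.le_floor (by exact_mod_cast hlog)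
  have hkL : 0.558 * log k < L + 1 := hL ▸ Nat.lt_floor_add_one _
  have hc : 0 < 6.5 * (L : ℝ) := by positivity
  have hdiff : ∀ x : ℝ, 0 < x → DifferentiableAt ℝ (gObj k a) x :=
    fun x hx ↦ (hasDerivAt_gObj k a hx.ne').differentiableAt
  have hneg : ∀ x : ℝ, 6.5 * L ≤ x → deriv (gObj k a) x < 0 := fun x hx ↦
    deriv_gObj_neg hk (hc.trans_le hx) ha (two_mul_exp_neg_mul_expPartialSum_lt hk hL1 hkL hx)
  refine ⟨hdiff, hneg, strictAntiOn_of_deriv_neg (convex_Ici _)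
    (fun x hx ↦ (hdiff x (hc.trans_le hx)).continuousAt.continuousWithinAt) fun x hx ↦ ?_⟩
  rw [interior_Ici] at hx
  exact hneg x hx.le
end

section
/- Let λ > 0 and η > 0 be real, let L be a natural number, and let a = (a_0,…,a_L) ∈ ℝ^{L+1}. Then ∑_{l=0}^{L} ∑_{h=0}^{∞} (λ^h/h!)·e^{−λ}·((η h)^l/l!)·e^{−η h}·a_l²·(l!)² = e^{−λ(1−e^{−η})}·∑_{l=0}^{L} a_l²·η^l·l!·T_l(λ·e^{−η}), where all series converge absolutely. (Probabilistically: if N ∼ Poisson(λ) and, conditionally on N = h, N′ ∼ Poisson(η h), then the left side equals 𝔼[(g_L(N′) − 1)²] for the estimator function g_L with g_L(j) = a_j·j! + 1 for j ≤ L and g_L(j) = 1 otherwise.) -/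
/-!
Since `λ^h e^{-ηh} = (λ e^{-η})^h`, the `l`-th inner series is, up to constant factors,
the `l`-th moment `∑ x^h/h! · h^l` of a Poisson weight at `x = λ e^{-η}`. Dobinski's formula
evaluates it as `e^x T_l(x)`: expand `h^l = ∑_r S(l,r) h(h-1)⋯(h-r+1)` and use the factorial
moments `∑ x^h/h! · h(h-1)⋯(h-r+1) = x^r e^x`, obtained by shifting the index by `r`.
-/

open Real Finset

/-- Stirling numbers of the second kind: the number of partitions of an `n`-element set
into `r` nonempty blocks, via the standard recurrence. -/
def stirling2 : ℕ → ℕ → ℕ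
  | 0, 0 => 1
  | 0, _ + 1 => 0
  | _ + 1, 0 => 0
  | n + 1, r + 1 => (r + 1) * stirling2 n (r + 1) + stirling2 n r

/-- The Touchard (Bell) polynomial `T_l(x) = ∑_{r=0}^{l} S(l,r) x^r`. -/
noncomputable def touchard (l : ℕ) (x : ℝ) : ℝ :=
  ∑ r ∈ Finset.range (l + 1), (stirling2 l r : ℝ) * x ^ r

theorem stirling2_eq_stirlingSecond : stirling2 = Nat.stirlingSecond := by
  funext n r
  induction n generalizing r with
  | zero => cases r <;> rfl
  | succ n ih => cases r <;> simp [stirling2, Nat.stirlingSecond_succ_succ, ih]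

theorem Nat.mul_descFactorial_eq (n r : ℕ) :
    n * n.descFactorial r = n.descFactorial (r + 1) + r * n.descFactorial r := by
  rcases le_or_gt r n with h | h
  · rw [Nat.descFactorial_succ, ← Nat.add_mul, Nat.sub_add_cancel h]
  · simp [Nat.descFactorial_of_lt h]

theorem Nat.pow_eq_sum_stirlingSecond_mul_descFactorial (n l : ℕ) :
    n ^ l = ∑ r ∈ range (l + 1), l.stirlingSecond r * n.descFactorial r := by
  induction l with
  | zero => simp
  | succ l ih =>
    -- both sides are `∑ r ∈ range (l + 2), r * S(l, r) * n.descFactorial r`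
    have shift : ∑ r ∈ range (l + 1), (r + 1) * l.stirlingSecond (r + 1) *
        n.descFactorial (r + 1) = ∑ r ∈ range (l + 1), r * l.stirlingSecond r *
        n.descFactorial r := by
      have h₁ := sum_range_succ' (fun r => r * l.stirlingSecond r * n.descFactorial r) (l + 1)
      have h₂ := sum_range_succ (fun r => r * l.stirlingSecond r * n.descFactorial r) (l + 1)
      simp only [Nat.stirlingSecond_eq_zero_of_lt l.lt_succ_self, mul_zero, zero_mul,
        add_zero] at h₁ h₂
      rw [← h₁, h₂]
    calc n ^ (l + 1)
        = ∑ r ∈ range (l + 1), l.stirlingSecond r * (n * n.descFactorial r) := by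
          rw [pow_succ', ih, mul_sum]; exact sum_congr rfl fun _ _ => by ring
      _ = ∑ r ∈ range (l + 1), (l.stirlingSecond r * n.descFactorial (r + 1) +
            (r + 1) * l.stirlingSecond (r + 1) * n.descFactorial (r + 1)) := by
          simp only [Nat.mul_descFactorial_eq, mul_add, sum_add_distrib, shift]
          exact congrArg₂ _ rfl (sum_congr rfl fun _ _ => by ring)
      _ = ∑ r ∈ range (l + 2), (l + 1).stirlingSecond r * n.descFactorial r := by
          rw [sum_range_succ' _ (l + 1)]
          simp only [Nat.stirlingSecond_succ_zero, zero_mul, add_zero,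
            Nat.stirlingSecond_succ_succ]
          exact sum_congr rfl fun _ _ => by ring

theorem hasSum_pow_div_factorial_mul_descFactorial (x : ℝ) (r : ℕ) :
    HasSum (fun n : ℕ => x ^ n / n.factorial * n.descFactorial r) (x ^ r * exp x) := by
  have hexp : HasSum (fun k : ℕ => x ^ r * (x ^ k / k.factorial)) (x ^ r * exp x) := by
    rw [exp_eq_exp_ℝ]
    exact (NormedSpace.expSeries_div_hasSum_exp x).mul_left _
  have hvanish : ∑ n ∈ range r, x ^ n / n.factorial * (n.descFactorial r : ℝ) = 0 :=
    sum_eq_zero fun n hn => by simp [Nat.descFactorial_of_lt (mem_range.mp hn)]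
  have hterm (k : ℕ) : x ^ (k + r) / (k + r).factorial * ((k + r).descFactorial r : ℝ) =
      x ^ r * (x ^ k / k.factorial) := by
    have hfac : ((k + r).factorial : ℝ) = k.factorial * (k + r).descFactorial r := by
      rw [← Nat.cast_mul, ← Nat.factorial_mul_descFactorial (Nat.le_add_left r k),
        Nat.add_sub_cancel]
    have hdesc : ((k + r).descFactorial r : ℝ) ≠ 0 := by
      exact_mod_cast (Nat.descFactorial_pos.mpr (Nat.le_add_left r k)).ne'
    rw [hfac, pow_add]
    field_simp
  rw [← hasSum_nat_add_iff' r, hvanish, sub_zero]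
  simpa only [hterm] using hexp

theorem hasSum_pow_div_factorial_mul_pow (x : ℝ) (l : ℕ) :
    HasSum (fun n : ℕ => x ^ n / n.factorial * (n : ℝ) ^ l) (exp x * touchard l x) := by
  have hterm (n : ℕ) : x ^ n / n.factorial * (n : ℝ) ^ l =
      ∑ r ∈ range (l + 1),
        (stirling2 l r : ℝ) * (x ^ n / n.factorial * n.descFactorial r) := by
    have hpow :
        (n : ℝ) ^ l = ∑ r ∈ range (l + 1), (stirling2 l r : ℝ) * n.descFactorial r := by
      rw [stirling2_eq_stirlingSecond]
      exact_mod_cast Nat.pow_eq_sum_stirlingSecond_mul_descFactorial n l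
    rw [hpow, mul_sum]
    exact sum_congr rfl fun _ _ => by ring
  have hval : exp x * touchard l x =
      ∑ r ∈ range (l + 1), (stirling2 l r : ℝ) * (x ^ r * exp x) := by
    unfold touchard
    rw [mul_sum]
    exact sum_congr rfl fun _ _ => by ring
  rw [funext hterm, hval]
  exact hasSum_sum fun r _ =>
    (hasSum_pow_div_factorial_mul_descFactorial x r).mul_left (stirling2 l r : ℝ)

theorem hasSum_poissonMixture_pmf (lam eta : ℝ) (l : ℕ) :
    HasSum (fun h : ℕ => lam ^ h / h.factorial * exp (-lam) *
        ((eta * h) ^ l / l.factorial) * exp (-(eta * h)))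
      (exp (-lam * (1 - exp (-eta))) *
        (eta ^ l / l.factorial * touchard l (lam * exp (-eta)))) := by
  have hterm (h : ℕ) : lam ^ h / h.factorial * exp (-lam) *
      ((eta * h) ^ l / l.factorial) * exp (-(eta * h)) =
      exp (-lam) * (eta ^ l / l.factorial) *
        ((lam * exp (-eta)) ^ h / h.factorial * (h : ℝ) ^ l) := by
    rw [show -(eta * h) = h * -eta by ring, exp_nat_mul]
    ring
  have hval : exp (-lam * (1 - exp (-eta))) *
        (eta ^ l / l.factorial * touchard l (lam * exp (-eta))) =
      exp (-lam) * (eta ^ l / l.factorial) *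
        (exp (lam * exp (-eta)) * touchard l (lam * exp (-eta))) := by
    rw [show -lam * (1 - exp (-eta)) = -lam + lam * exp (-eta) by ring, exp_add]
    ring
  rw [funext hterm, hval]
  exact (hasSum_pow_div_factorial_mul_pow _ l).mul_left _

theorem stmt_11_general (lam eta : ℝ)
    (L : ℕ) (a : Fin (L + 1) → ℝ) :
    (∀ l : Fin (L + 1), Summable (fun h : ℕ =>
      |lam ^ h / (Nat.factorial h : ℝ) * Real.exp (-lam) *
        ((eta * h) ^ (l : ℕ) / (Nat.factorial (l : ℕ) : ℝ)) * Real.exp (-(eta * h)) *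
        ((a l) ^ 2 * ((Nat.factorial (l : ℕ) : ℝ)) ^ 2)|)) ∧
    ∑ l : Fin (L + 1), ∑' h : ℕ,
        lam ^ h / (Nat.factorial h : ℝ) * Real.exp (-lam) *
          ((eta * h) ^ (l : ℕ) / (Nat.factorial (l : ℕ) : ℝ)) * Real.exp (-(eta * h)) *
          ((a l) ^ 2 * ((Nat.factorial (l : ℕ) : ℝ)) ^ 2) =
      Real.exp (-lam * (1 - Real.exp (-eta))) *
        ∑ l : Fin (L + 1), (a l) ^ 2 * eta ^ (l : ℕ) * (Nat.factorial (l : ℕ) : ℝ) *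
          touchard (l : ℕ) (lam * Real.exp (-eta)) := by
  have hsum (l : Fin (L + 1)) := (hasSum_poissonMixture_pmf lam eta l).mul_right
    (a l ^ 2 * (l : ℕ).factorial ^ 2)
  refine ⟨fun l => (hsum l).summable.abs, ?_⟩
  rw [sum_congr rfl fun l _ => (hsum l).tsum_eq, mul_sum]
  refine sum_congr rfl fun l _ => ?_
  field_simp

theorem stmt_11 (lam eta : ℝ) (hlam : 0 < lam) (heta : 0 < eta)
    (L : ℕ) (a : Fin (L + 1) → ℝ) :
    (∀ l : Fin (L + 1), Summable (fun h : ℕ =>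
      |lam ^ h / (Nat.factorial h : ℝ) * Real.exp (-lam) *
        ((eta * h) ^ (l : ℕ) / (Nat.factorial (l : ℕ) : ℝ)) * Real.exp (-(eta * h)) *
        ((a l) ^ 2 * ((Nat.factorial (l : ℕ) : ℝ)) ^ 2)|)) ∧
    ∑ l : Fin (L + 1), ∑' h : ℕ,
        lam ^ h / (Nat.factorial h : ℝ) * Real.exp (-lam) *
          ((eta * h) ^ (l : ℕ) / (Nat.factorial (l : ℕ) : ℝ)) * Real.exp (-(eta * h)) *
          ((a l) ^ 2 * ((Nat.factorial (l : ℕ) : ℝ)) ^ 2) =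
      Real.exp (-lam * (1 - Real.exp (-eta))) *
        ∑ l : Fin (L + 1), (a l) ^ 2 * eta ^ (l : ℕ) * (Nat.factorial (l : ℕ) : ℝ) *
          touchard (l : ℕ) (lam * Real.exp (-eta)) :=
  stmt_11_general lam eta L a
end

section
/- Let L be a natural number, k > 0 real, and 0 < c ≤ d real. Define F : ℝ^{L+1} → ℝ by F(a) = sup_{λ ∈ [c,d]} [aᵀM(λ)a + (Λ(λ)ᵀa)²], where M(λ) = (e^{−λ}/k)·diag(λ^0·0!, …, λ^L·L!) and Λ(λ) = e^{−λ}·(λ^0, …, λ^L)ᵀ. Then F is strictly convex on ℝ^{L+1}, and F attains a unique minimizer on the affine subspace {a ∈ ℝ^{L+1} : a_0 = −1}. -/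
open Real Finset

lemma sq_combo_le (t u v : ℝ) (ht : 0 ≤ t) (h1 : t ≤ 1) :
    (t * u + (1 - t) * v) ^ 2 ≤ t * u ^ 2 + (1 - t) * v ^ 2 := by
  nlinarith [mul_nonneg (mul_nonneg ht (by linarith : (0:ℝ) ≤ 1 - t)) (sq_nonneg (u - v))]

lemma sq_combo_lt (t u v : ℝ) (ht : 0 < t) (h1 : t < 1) (huv : u ≠ v) :
    (t * u + (1 - t) * v) ^ 2 < t * u ^ 2 + (1 - t) * v ^ 2 := by
  have huv' : u - v ≠ 0 := sub_ne_zero.mpr huv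
  have : (u - v) ^ 2 > 0 := by positivity
  nlinarith [mul_pos (mul_pos ht (by linarith : (0:ℝ) < 1 - t)) this]

lemma gObj_cont {L : ℕ} (k : ℝ) (a : Fin (L + 1) → ℝ) : Continuous (gObj k a) := by
  unfold gObj
  fun_prop

/-- strict convexity of `gObj k · lam` for `lam > 0`. -/
lemma gObj_strict {L : ℕ} (k : ℝ) (hk : 0 < k) (lam : ℝ) (hlam : 0 < lam)
    (x y : Fin (L + 1) → ℝ) (hxy : x ≠ y) (t s : ℝ) (ht : 0 < t) (hs : 0 < s)
    (hts : t + s = 1) :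
    gObj k (t • x + s • y) lam < t * gObj k x lam + s * gObj k y lam := by
  have hs' : s = 1 - t := by linarith
  subst hs'
  have h1 : t < 1 := by linarith
  obtain ⟨l₀, hl₀⟩ := Function.ne_iff.mp hxy
  have hz : ∀ l, (t • x + (1 - t) • y) l = t * x l + (1 - t) * y l := by
    intro l; simp [Pi.add_apply, Pi.smul_apply, smul_eq_mul]
  -- sum part
  have hsum : (∑ l : Fin (L + 1), Real.exp (-lam) * ((t • x + (1 - t) • y) l) ^ 2 * lam ^ (l : ℕ) * (Nat.factorial (l : ℕ) : ℝ))
      < ∑ l : Fin (L + 1), (t * (Real.exp (-lam) * (x l) ^ 2 * lam ^ (l : ℕ) * (Nat.factorial (l : ℕ) : ℝ))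
        + (1 - t) * (Real.exp (-lam) * (y l) ^ 2 * lam ^ (l : ℕ) * (Nat.factorial (l : ℕ) : ℝ))) := by
    apply Finset.sum_lt_sum
    · intro l _
      have hC : 0 < Real.exp (-lam) * lam ^ (l : ℕ) * (Nat.factorial (l : ℕ) : ℝ) := by
        have := (l : ℕ).factorial_pos
        positivity
      have := mul_le_mul_of_nonneg_left
        (sq_combo_le t (x l) (y l) ht.le h1.le) hC.le
      rw [hz l]; nlinarith [this]
    · refine ⟨l₀, Finset.mem_univ _, ?_⟩
      have hC : 0 < Real.exp (-lam) * lam ^ (l₀ : ℕ) * (Nat.factorial (l₀ : ℕ) : ℝ) := by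
        have := (l₀ : ℕ).factorial_pos
        positivity
      have := mul_lt_mul_of_pos_left (sq_combo_lt t (x l₀) (y l₀) ht h1 hl₀) hC
      rw [hz l₀]; nlinarith [this]
  -- linear part
  have hlin : Real.exp (-lam) * ∑ l : Fin (L + 1), (t • x + (1 - t) • y) l * lam ^ (l : ℕ)
      = t * (Real.exp (-lam) * ∑ l : Fin (L + 1), x l * lam ^ (l : ℕ))
        + (1 - t) * (Real.exp (-lam) * ∑ l : Fin (L + 1), y l * lam ^ (l : ℕ)) := by
    rw [Finset.mul_sum]
    rw [show ∀ u v : ℝ, t * (Real.exp (-lam) * u) + (1 - t) * (Real.exp (-lam) * v)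
      = Real.exp (-lam) * (t * u) + Real.exp (-lam) * ((1-t) * v) from fun u v => by ring]
    rw [Finset.mul_sum, Finset.mul_sum, Finset.mul_sum, Finset.mul_sum,
      ← Finset.sum_add_distrib]
    apply Finset.sum_congr rfl
    intro l _
    rw [hz l]; ring
  have hsq : (Real.exp (-lam) * ∑ l : Fin (L + 1), (t • x + (1 - t) • y) l * lam ^ (l : ℕ)) ^ 2
      ≤ t * (Real.exp (-lam) * ∑ l : Fin (L + 1), x l * lam ^ (l : ℕ)) ^ 2
        + (1 - t) * (Real.exp (-lam) * ∑ l : Fin (L + 1), y l * lam ^ (l : ℕ)) ^ 2 := by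
    rw [hlin]
    exact sq_combo_le t _ _ ht.le h1.le
  unfold gObj
  rw [Finset.sum_add_distrib, ← Finset.mul_sum, ← Finset.mul_sum] at hsum
  have hk' : 0 < 1 / k := by positivity
  nlinarith [mul_lt_mul_of_pos_left hsum hk']

theorem stmt_15 (L : ℕ) (k : ℝ) (hk : 0 < k) (c d : ℝ) (hc : 0 < c) (hcd : c ≤ d)
    (F : (Fin (L + 1) → ℝ) → ℝ)
    (hF : F = fun a => sSup (gObj k a '' Set.Icc c d)) :
    StrictConvexOn ℝ Set.univ F ∧
    ∃! a₀ : Fin (L + 1) → ℝ, a₀ 0 = -1 ∧ ∀ b : Fin (L + 1) → ℝ, b 0 = -1 → F a₀ ≤ F b := by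
  have hbdd : ∀ a : Fin (L + 1) → ℝ, BddAbove (gObj k a '' Set.Icc c d) :=
    fun a => (isCompact_Icc.image (gObj_cont k a)).bddAbove
  have hle : ∀ (a : Fin (L + 1) → ℝ) (lam : ℝ), lam ∈ Set.Icc c d → gObj k a lam ≤ F a := by
    intro a lam hlam
    rw [hF]
    exact le_csSup (hbdd a) ⟨lam, hlam, rfl⟩
  have hmax : ∀ a : Fin (L + 1) → ℝ, ∃ lam ∈ Set.Icc c d, F a = gObj k a lam := by
    intro a
    obtain ⟨lam, hlam, hmax⟩ := isCompact_Icc.exists_isMaxOn (Set.nonempty_Icc.2 hcd)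
      (gObj_cont k a).continuousOn
    refine ⟨lam, hlam, ?_⟩
    rw [hF]
    refine le_antisymm (csSup_le ((Set.nonempty_Icc.2 hcd).image _) ?_)
      (le_csSup (hbdd a) ⟨lam, hlam, rfl⟩)
    rintro _ ⟨μ, hμ, rfl⟩
    exact hmax hμ
  -- strict convexity
  have hstrict : StrictConvexOn ℝ Set.univ F := by
    refine ⟨convex_univ, ?_⟩
    intro x _ y _ hxy t s ht hs hts
    obtain ⟨lam, hlam, hFz⟩ := hmax (t • x + s • y)
    have hlam0 : 0 < lam := lt_of_lt_of_le hc hlam.1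
    calc F (t • x + s • y) = gObj k (t • x + s • y) lam := hFz
      _ < t * gObj k x lam + s * gObj k y lam := gObj_strict k hk lam hlam0 x y hxy t s ht hs hts
      _ ≤ t * F x + s * F y := by
          have h1 := hle x lam hlam
          have h2 := hle y lam hlam
          nlinarith [mul_le_mul_of_nonneg_left h1 ht.le, mul_le_mul_of_nonneg_left h2 hs.le]
  refine ⟨hstrict, ?_⟩
  have hconv : ConvexOn ℝ Set.univ F := hstrict.convexOn
  have hcont : Continuous F := by
    exact continuousOn_univ.mp (hconv.continuousOn isOpen_univ)
  -- coercivity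
  set m : ℝ := min c 1 with hm
  have hm0 : 0 < m := lt_min hc one_pos
  set K : ℝ := Real.exp (-c) * m ^ L / k with hK
  have hK0 : 0 < K := by positivity
  have hcoer : ∀ a : Fin (L + 1) → ℝ, K * ∑ l : Fin (L + 1), (a l) ^ 2 ≤ F a := by
    intro a
    refine le_trans ?_ (hle a c (Set.mem_Icc.2 ⟨le_refl c, hcd⟩))
    unfold gObj
    have hterm : ∀ l : Fin (L + 1),
        Real.exp (-c) * m ^ L * (a l) ^ 2 ≤
        Real.exp (-c) * (a l) ^ 2 * c ^ (l : ℕ) * (Nat.factorial (l : ℕ) : ℝ) := by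
      intro l
      have h1 : m ^ L ≤ m ^ (l : ℕ) :=
        pow_le_pow_of_le_one hm0.le (min_le_right c 1) (Fin.is_le l)
      have h2 : m ^ (l : ℕ) ≤ c ^ (l : ℕ) :=
        pow_le_pow_left₀ hm0.le (min_le_left c 1) _
      have h3 : (1 : ℝ) ≤ (Nat.factorial (l : ℕ) : ℝ) := by
        exact_mod_cast (l : ℕ).factorial_pos
      have h4 : m ^ L * 1 ≤ c ^ (l : ℕ) * (Nat.factorial (l : ℕ) : ℝ) :=
        mul_le_mul (h1.trans h2) h3 zero_le_one (by positivity)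
      have h5 := mul_le_mul_of_nonneg_left h4 (by positivity : (0:ℝ) ≤ Real.exp (-c) * (a l) ^ 2)
      nlinarith [h5]
    have hsum : ∑ l : Fin (L + 1), Real.exp (-c) * m ^ L * (a l) ^ 2 ≤
        ∑ l : Fin (L + 1), Real.exp (-c) * (a l) ^ 2 * c ^ (l : ℕ) * (Nat.factorial (l : ℕ) : ℝ) :=
      Finset.sum_le_sum fun l _ => hterm l
    have hsq : (0:ℝ) ≤ (Real.exp (-c) * ∑ l : Fin (L + 1), a l * c ^ (l : ℕ)) ^ 2 := sq_nonneg _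
    have hkinv : 0 < 1 / k := by positivity
    have h6 := mul_le_mul_of_nonneg_left hsum hkinv.le
    have h7 : K * ∑ l : Fin (L + 1), (a l) ^ 2
        = (1 / k) * ∑ l : Fin (L + 1), Real.exp (-c) * m ^ L * (a l) ^ 2 := by
      rw [Finset.mul_sum, Finset.mul_sum]
      apply Finset.sum_congr rfl
      intro l _
      rw [hK]; ring
    linarith [h6, hsq, h7.le, h7.ge]
  -- existence of minimizer on the slice
  set a₁ : Fin (L + 1) → ℝ := fun l => if l = 0 then -1 else 0 with ha₁
  have ha₁0 : a₁ 0 = -1 := by simp [ha₁]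
  set S : Set (Fin (L + 1) → ℝ) := {a | a 0 = -1 ∧ F a ≤ F a₁} with hS
  have hSclosed : IsClosed S := by
    apply IsClosed.inter
    · exact isClosed_eq (continuous_apply 0) continuous_const
    · exact isClosed_le hcont continuous_const
  have hFnonneg : ∀ a, 0 ≤ F a := by
    intro a
    have := hcoer a
    have h0 : 0 ≤ K * ∑ l : Fin (L + 1), (a l) ^ 2 := by positivity
    linarith
  have hSbounded : Bornology.IsBounded S := by
    rw [isBounded_iff_forall_norm_le]
    refine ⟨Real.sqrt (F a₁ / K), ?_⟩
    intro a ha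
    have hFa : F a ≤ F a₁ := ha.2
    have h1 : K * ∑ l : Fin (L + 1), (a l) ^ 2 ≤ F a₁ := (hcoer a).trans hFa
    have h2 : ∑ l : Fin (L + 1), (a l) ^ 2 ≤ F a₁ / K := by
      rw [le_div_iff₀ hK0]; linarith
    rw [pi_norm_le_iff_of_nonneg (Real.sqrt_nonneg _)]
    intro i
    have h3 : (a i) ^ 2 ≤ ∑ l : Fin (L + 1), (a l) ^ 2 :=
      Finset.single_le_sum (fun l _ => sq_nonneg (a l)) (Finset.mem_univ i)
    calc ‖a i‖ = Real.sqrt ((a i) ^ 2) := by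
          rw [Real.sqrt_sq_eq_abs]; rfl
      _ ≤ Real.sqrt (F a₁ / K) := Real.sqrt_le_sqrt (h3.trans h2)
  have hScompact : IsCompact S := Metric.isCompact_of_isClosed_isBounded hSclosed hSbounded
  have hSne : S.Nonempty := ⟨a₁, ha₁0, le_refl _⟩
  obtain ⟨a₀, ha₀S, ha₀min⟩ := hScompact.exists_isMinOn hSne hcont.continuousOn
  have hmin : ∀ b : Fin (L + 1) → ℝ, b 0 = -1 → F a₀ ≤ F b := by
    intro b hb
    rcases le_or_gt (F b) (F a₁) with h | h
    · exact ha₀min ⟨hb, h⟩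
    · exact le_trans (ha₀min ⟨ha₁0, le_refl _⟩) h.le
  refine ⟨a₀, ⟨ha₀S.1, hmin⟩, ?_⟩
  rintro b ⟨hb0, hbmin⟩
  by_contra hne
  have heq : F a₀ = F b := le_antisymm (hmin b hb0) (hbmin a₀ ha₀S.1)
  set z : Fin (L + 1) → ℝ := (1/2 : ℝ) • b + (1/2 : ℝ) • a₀ with hz
  have hz0 : z 0 = -1 := by
    simp only [hz, Pi.add_apply, Pi.smul_apply, smul_eq_mul, hb0, ha₀S.1]
    ring
  have hlt : F z < (1/2) * F b + (1/2) * F a₀ :=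
    hstrict.2 (Set.mem_univ b) (Set.mem_univ a₀) hne (by norm_num) (by norm_num) (by norm_num)
  have : F b ≤ F z := hbmin z hz0
  linarith [heq.ge, heq.le]
end
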